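/- arXiv:1710.09321 — 9 statements merged into one kernel-verified Lean document; each statement's English description precedes it below -/
import Mathlib

section
/- For every even integer n ≥ 2, there is no bijection f : ℤ/nℤ → ℤ/nℤ such that f(x) - f(y) ≠ x - y for all distinct x, y ∈ ℤ/nℤ. -/
lemma sum_zmod_ne_zero (n : ℕ) (hn : 2 ≤ n) (he : Even n) [NeZero n] :
    (∑ x : ZMod n, x) ≠ 0 := by
  obtain ⟨m, hm⟩ := he
  have hm' : n = 2 * m := by omega
  have hsum : (∑ x : ZMod n, x) = ((∑ i ∈ Finset.range n, i : ℕ) : ZMod n) := by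
    rw [Nat.cast_sum]
    exact Finset.sum_bij' (fun (x : ZMod n) _ => x.val) (fun (i : ℕ) _ => (i : ZMod n))
      (fun a _ => Finset.mem_range.mpr (ZMod.val_lt a))
      (fun a _ => Finset.mem_univ _)
      (fun a _ => by simp [ZMod.natCast_val, ZMod.cast_id])
      (fun a ha => by simp [ZMod.val_natCast_of_lt (Finset.mem_range.mp ha)])
      (fun a _ => by simp [ZMod.natCast_val, ZMod.cast_id])
  rw [hsum, Ne, ZMod.natCast_eq_zero_iff, Finset.sum_range_id]
  intro hdvd
  have heq : n * (n - 1) / 2 = m * (n - 1) := by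
    rw [hm', Nat.mul_assoc, Nat.mul_div_cancel_left _ two_pos]
  rw [heq] at hdvd
  obtain ⟨k, hk⟩ := hdvd
  have hm1 : 0 < m := by omega
  rw [hm'] at hk
  have hk2 : m * (2 * m - 1) = m * (2 * k) := by rw [hk]; ring
  have := Nat.eq_of_mul_eq_mul_left hm1 hk2
  omega

theorem no_antiautomorphism_of_even (n : ℕ) (hn : 2 ≤ n) (he : Even n) :
    ¬ ∃ f : ZMod n → ZMod n, Function.Bijective f ∧
      ∀ x y : ZMod n, x ≠ y → f x - f y ≠ x - y := by
  haveI : NeZero n := ⟨by omega⟩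
  rintro ⟨f, hf, hanti⟩
  set g : ZMod n → ZMod n := fun x => f x - x with hg
  have hginj : Function.Injective g := by
    intro x y h
    by_contra hne
    exact hanti x y hne (by simpa [hg, sub_eq_sub_iff_sub_eq_sub] using h)
  have hgbij : Function.Bijective g := Finite.injective_iff_bijective.mp hginj
  have h1 : (∑ x : ZMod n, g x) = ∑ x : ZMod n, x :=
    Fintype.sum_bijective g hgbij _ _ (fun _ => rfl)
  have h2 : (∑ x : ZMod n, g x) = 0 := by
    have hf1 : (∑ x : ZMod n, f x) = ∑ x : ZMod n, x :=
      Fintype.sum_bijective f hf _ _ (fun _ => rfl)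
    simp only [hg, Finset.sum_sub_distrib, hf1, sub_self]
  exact sum_zmod_ne_zero n hn he (h1 ▸ h2)
end

section
/- Let p be an odd prime. Then ℤ/pℤ admits at least p² - 2p antiautomorphisms. -/
/-!
Over any finite field `K`, every affine map `x ↦ a * x + b` with `a ∉ {0, 1}` is an
antiautomorphism: it is bijective because `a` is a unit, and `x ↦ x - (a * x + b) = (1 - a) * x - b`
is injective because `1 - a` is a unit. Distinct pairs `(a, b)` give distinct maps, so there are at
least `(q - 2) * q` antiautomorphisms, where `q = |K|`.
-/

open Function

def IsAntiautomorphism {G : Type*} [AddGroup G] (f : G → G) : Prop :=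
  Bijective f ∧ Injective (fun x => x - f x)

section Affine

variable {R : Type*} [Ring R]

theorem isAntiautomorphism_affine {a : R} (ha : IsUnit a) (ha' : IsUnit (1 - a)) (b : R) :
    IsAntiautomorphism (fun x => a * x + b) := by
  refine ⟨⟨fun x y hxy => ha.mul_left_cancel (add_right_cancel hxy), fun y => ?_⟩, ?_⟩
  · obtain ⟨u, rfl⟩ := ha
    exact ⟨↑u⁻¹ * (y - b), by simp⟩
  · intro x y hxy
    have h : (1 - a) * x = (1 - a) * y := by linear_combination (norm := noncomm_ring) hxy
    exact ha'.mul_left_cancel h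

theorem affine_injective : Injective (fun q : R × R => fun x => q.1 * x + q.2) := by
  intro q₁ q₂ h
  have h₀ : q₁.2 = q₂.2 := by simpa using congrFun h 0
  have h₁ : q₁.1 + q₁.2 = q₂.1 + q₂.2 := by simpa using congrFun h 1
  exact Prod.ext (by rwa [h₀, add_left_inj] at h₁) h₀

end Affine

theorem card_mul_card_sub_two_le_ncard_isAntiautomorphism (K : Type*) [Field K] [Fintype K]
    [DecidableEq K] :
    Fintype.card K * (Fintype.card K - 2) ≤ {f : K → K | IsAntiautomorphism f}.ncard := by
  set A : Finset (K × K) := ({0, 1}ᶜ : Finset K) ×ˢ Finset.univ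
  have hA : A.card = (Fintype.card K - 2) * Fintype.card K := by
    simp only [A, Finset.card_product, Finset.card_compl, Finset.card_pair (zero_ne_one' K),
      Finset.card_univ]
  rw [Set.ncard_eq_toFinset_card _ (Set.toFinite _), mul_comm, ← hA]
  refine Finset.card_le_card_of_injOn _ (fun q hq => ?_) affine_injective.injOn
  simp only [A, Finset.coe_product, Finset.coe_compl, Set.mem_prod, Set.mem_compl_iff,
    Finset.coe_insert, Finset.coe_singleton, Set.mem_insert_iff, Set.mem_singleton_iff,
    not_or] at hq
  simpa using isAntiautomorphism_affine (Ne.isUnit hq.1.1)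
    (sub_ne_zero.mpr (Ne.symm hq.1.2)).isUnit q.2

theorem card_antiautomorphisms_ge_general (p : ℕ) (hp : p.Prime) :
    p ^ 2 - 2 * p ≤
      {f : ZMod p → ZMod p | Function.Bijective f ∧
        Function.Injective (fun x => x - f x)}.ncard := by
  have : Fact p.Prime := ⟨hp⟩
  calc p ^ 2 - 2 * p = Fintype.card (ZMod p) * (Fintype.card (ZMod p) - 2) := by
        rw [ZMod.card, Nat.mul_sub, sq, mul_comm 2]
    _ ≤ _ := card_mul_card_sub_two_le_ncard_isAntiautomorphism (ZMod p)

theorem card_antiautomorphisms_ge (p : ℕ) (hp : p.Prime) (hodd : Odd p) :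
    p ^ 2 - 2 * p ≤
      {f : ZMod p → ZMod p | Function.Bijective f ∧
        Function.Injective (fun x => x - f x)}.ncard :=
  card_antiautomorphisms_ge_general p hp
end

section
/- Let p be an odd prime and α ≥ 1. Then ℤ/p^αℤ admits at least p^(2α) - 2p^(2α-1) antiautomorphisms. -/
theorem card_antiautomorphisms_prime_pow_ge (p α : ℕ) (hp : p.Prime) (hodd : Odd p)
    (hα : 1 ≤ α) :
    p ^ (2 * α) - 2 * p ^ (2 * α - 1) ≤
      {f : ZMod (p ^ α) → ZMod (p ^ α) | Function.Bijective f ∧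
        Function.Injective (fun x => x - f x)}.ncard := by
  haveI : NeZero (p ^ α) := ⟨pow_ne_zero _ hp.pos.ne'⟩
  set n := p ^ α with hn
  -- count of units
  have hunits : (Finset.univ.filter (fun a : ZMod n => IsUnit a)).card = Nat.totient n := by
    rw [← Fintype.card_subtype, ← ZMod.card_units_eq_totient n]
    exact Fintype.card_congr {
      toFun := fun a => a.2.unit
      invFun := fun u => ⟨(u : ZMod n), u.isUnit⟩
      left_inv := fun a => Subtype.ext a.2.unit_spec
      right_inv := fun u => Units.ext u.isUnit.unit_spec }
  have htot : Nat.totient n = n - p ^ (α - 1) := by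
    rw [hn, Nat.totient_prime_pow hp hα]
    have h1 : p ^ (α - 1) * p = p ^ α := by
      rw [← pow_succ]; congr 1; omega
    rw [Nat.mul_sub, h1, mul_one]
  have hple : p ^ (α - 1) ≤ n := by
    rw [hn]; exact Nat.pow_le_pow_right hp.pos (by omega)
  -- count of non-units
  have hcardZ : Fintype.card (ZMod n) = n := ZMod.card n
  have hnonunits : (Finset.univ.filter (fun a : ZMod n => ¬ IsUnit a)).card = p ^ (α - 1) := by
    have := Finset.card_filter_add_card_filter_not (s := (Finset.univ : Finset (ZMod n)))
      (p := fun a : ZMod n => IsUnit a)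
    rw [Finset.card_univ, hcardZ, hunits, htot] at this
    omega
  -- set of shifted non-units
  have hnonunits' : (Finset.univ.filter (fun a : ZMod n => ¬ IsUnit (1 - a))).card
      = p ^ (α - 1) := by
    rw [← hnonunits]
    apply Finset.card_bij (fun a _ => 1 - a)
    · intro a ha
      simp only [Finset.mem_filter, Finset.mem_univ, true_and] at ha ⊢
      exact ha
    · intro a ha b hb h
      have : (1 : ZMod n) - (1 - a) = 1 - (1 - b) := by rw [h]
      simpa using this
    · intro b hb
      simp only [Finset.mem_filter, Finset.mem_univ, true_and] at hb ⊢
      exact ⟨1 - b, by simpa using hb, by ring⟩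
  -- good multipliers
  set A : Finset (ZMod n) :=
    Finset.univ.filter (fun a : ZMod n => IsUnit a ∧ IsUnit (1 - a)) with hA
  have hAcard : n - 2 * p ^ (α - 1) ≤ A.card := by
    have hsub : Finset.univ.filter (fun a : ZMod n => ¬ (IsUnit a ∧ IsUnit (1 - a)))
        ⊆ (Finset.univ.filter (fun a : ZMod n => ¬ IsUnit a))
          ∪ (Finset.univ.filter (fun a : ZMod n => ¬ IsUnit (1 - a))) := by
      intro a ha
      simp only [Finset.mem_filter, Finset.mem_univ, true_and, Finset.mem_union] at ha ⊢
      tauto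
    have hle : (Finset.univ.filter
        (fun a : ZMod n => ¬ (IsUnit a ∧ IsUnit (1 - a)))).card ≤ 2 * p ^ (α - 1) := by
      calc _ ≤ _ := Finset.card_le_card hsub
        _ ≤ _ := Finset.card_union_le _ _
        _ = 2 * p ^ (α - 1) := by rw [hnonunits, hnonunits']; ring
    have := Finset.card_filter_add_card_filter_not
      (s := (Finset.univ : Finset (ZMod n)))
      (p := fun a : ZMod n => IsUnit a ∧ IsUnit (1 - a))
    rw [Finset.card_univ, hcardZ, ← hA] at this
    omega
  -- the affine maps
  set F : ZMod n × ZMod n → (ZMod n → ZMod n) := fun q x => q.1 * x + q.2 with hF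
  set S : Finset (ZMod n × ZMod n) := A ×ˢ Finset.univ with hS
  have hinj : Set.InjOn F ↑S := by
    intro q _ r _ h
    have h0 : F q 0 = F r 0 := by rw [h]
    have h1 : F q 1 = F r 1 := by rw [h]
    simp only [hF, mul_zero, zero_add, mul_one] at h0 h1
    have : q.1 = r.1 := by
      have := h1
      rw [h0] at this
      exact add_right_cancel this
    exact Prod.ext this h0
  have hsub : F '' ↑S ⊆ {f : ZMod n → ZMod n | Function.Bijective f ∧
      Function.Injective (fun x => x - f x)} := by
    rintro f ⟨⟨a, b⟩, hq, rfl⟩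
    simp only [hS, Finset.coe_product, Set.mem_prod, Finset.mem_coe, hA,
      Finset.mem_filter, Finset.mem_univ, true_and] at hq
    obtain ⟨⟨ha, h1a⟩, -⟩ := hq
    constructor
    · rw [← Finite.injective_iff_bijective]
      intro x y hxy
      simp only [hF] at hxy
      have : a * x = a * y := by
        have := add_right_cancel hxy
        exact this
      exact ha.mul_left_cancel this
    · intro x y hxy
      simp only [hF] at hxy
      have : (1 - a) * x = (1 - a) * y := by linear_combination hxy
      exact h1a.mul_left_cancel this
  calc p ^ (2 * α) - 2 * p ^ (2 * α - 1)
      ≤ S.card := by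
        rw [hS, Finset.card_product, Finset.card_univ, hcardZ]
        have h2 : (n - 2 * p ^ (α - 1)) * n ≤ A.card * n :=
          Nat.mul_le_mul_right n hAcard
        refine le_trans (le_of_eq ?_) h2
        have e1 : α + α = 2 * α := by omega
        have e2 : α - 1 + α = 2 * α - 1 := by omega
        rw [Nat.sub_mul, hn, ← pow_add, mul_assoc, ← pow_add, e1, e2]
    _ = (F '' ↑S).ncard := by rw [Set.ncard_image_of_injOn hinj, Set.ncard_coe_finset]
    _ ≤ _ := Set.ncard_le_ncard hsub (Set.toFinite _)
end

section
/- Every torsion-free abelian group admits an antiautomorphism. -/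
theorem torsion_free_admits_antiautomorphism (G : Type*) [AddCommGroup G]
    (h : ∀ x : G, x ≠ 0 → ¬ IsOfFinAddOrder x) :
    ∃ f : G → G, Function.Bijective f ∧
      Function.Injective (fun x => x - f x) := by
  refine ⟨fun x => -x, neg_involutive.bijective, ?_⟩
  intro x y hxy
  simp only [sub_neg_eq_add] at hxy
  by_contra hne
  have hz : (2 : ℕ) • (x - y) = 0 := by
    simp [two_nsmul, sub_add_sub_comm, hxy]
  have : IsOfFinAddOrder (x - y) := by
    rw [isOfFinAddOrder_iff_nsmul_eq_zero]
    exact ⟨2, by norm_num, hz⟩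
  exact h (x - y) (sub_ne_zero.mpr hne) this
end

section
/- Let G be a finite abelian group that has exactly one element of order 2. Then G does not admit any antiautomorphism. -/
theorem no_antiautomorphism_of_unique_order_two (G : Type*) [AddCommGroup G] [Fintype G]
    (h : ∃! g : G, addOrderOf g = 2) :
    ¬ ∃ f : G → G, Function.Bijective f ∧
      Function.Injective (fun x => x - f x) := by
  classical
  rintro ⟨f, hf, hinj⟩
  obtain ⟨g, hg2, hgu⟩ := h
  have hg0 : g ≠ 0 := by
    intro h0
    rw [h0, addOrderOf_zero] at hg2
    omega
  -- Step 1: the sum of all elements equals g (generalized Wilson)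
  have hfilter : Finset.univ.filter (fun x : G => x = -x) = {0, g} := by
    ext x
    simp only [Finset.mem_filter, Finset.mem_univ, true_and, Finset.mem_insert,
      Finset.mem_singleton]
    constructor
    · intro hx
      have h2x : (2 : ℕ) • x = 0 := by
        rw [two_nsmul]
        nth_rewrite 2 [hx]
        simp
      have hdvd : addOrderOf x ∣ 2 := addOrderOf_dvd_of_nsmul_eq_zero h2x
      rcases (Nat.prime_two).eq_one_or_self_of_dvd _ hdvd with h1 | h1
      · left; exact AddMonoid.addOrderOf_eq_one_iff.mp h1
      · right; exact hgu x h1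
    · rintro (rfl | hxg)
      · simp
      · subst hxg
        have h2g : (2 : ℕ) • x = 0 := by
          rw [← hg2]; exact addOrderOf_nsmul_eq_zero x
        rw [two_nsmul] at h2g
        exact eq_neg_of_add_eq_zero_left h2g
  have hsum2 : ∑ x ∈ Finset.univ.filter (fun x : G => ¬ x = -x), x = 0 := by
    refine Finset.sum_involution (fun a _ => -a) (fun a _ => by simp) ?_ ?_
      (fun a _ => neg_neg a)
    · intro a ha _ heq
      exact (Finset.mem_filter.mp ha).2 heq.symm
    · intro a ha
      simp only [Finset.mem_filter, Finset.mem_univ, true_and, neg_neg]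
      intro hc
      exact (Finset.mem_filter.mp ha).2 hc.symm
  have hS : ∑ x : G, x = g := by
    rw [← Finset.sum_filter_add_sum_filter_not Finset.univ (fun x : G => x = -x),
      hsum2, add_zero, hfilter, Finset.sum_pair (Ne.symm hg0), zero_add]
  -- Step 2: the sum of x - f x over all x is both 0 and g
  have hbij : Function.Bijective (fun x : G => x - f x) :=
    Finite.injective_iff_bijective.mp hinj
  have h1 : ∑ x : G, (x - f x) = ∑ x : G, x :=
    Fintype.sum_bijective _ hbij _ _ (fun x => rfl)
  have h2 : ∑ x : G, (x - f x) = 0 := by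
    rw [Finset.sum_sub_distrib, Fintype.sum_bijective f hf (fun x => f x) id (fun x => rfl)]
    simp
  rw [h2, hS] at h1
  exact hg0 h1.symm
end

section
/- For every integer r ≥ 2, the group (ℤ/2ℤ)^r admits an antiautomorphism. -/
def Fr (r : ℕ) (x : Fin r → ZMod 2) : Fin r → ZMod 2 := fun i =>
  if i.val = 0 then x ⟨r - 1, Nat.sub_lt i.pos Nat.one_pos⟩
  else if i.val = 1 then x ⟨0, i.pos⟩ + x ⟨r - 1, Nat.sub_lt i.pos Nat.one_pos⟩
  else x ⟨i.val - 1, by omega⟩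

theorem z2_pow_r_admits_antiautomorphism (r : ℕ) (hr : 2 ≤ r) :
    ∃ f : (Fin r → ZMod 2) → (Fin r → ZMod 2), Function.Bijective f ∧
      Function.Injective (fun x => x - f x) := by
  have hr1 : r - 1 < r := by omega
  have h1r : 1 < r := by omega
  have h0r : 0 < r := by omega
  have two : ∀ z : ZMod 2, z + z = 0 := by decide
  refine ⟨Fr r, ?_, ?_⟩
  · rw [← Finite.injective_iff_bijective]
    intro x y h
    have hc : ∀ j : Fin r, Fr r x j = Fr r y j := fun j => congrFun h j
    -- j = 0 : x (r-1) = y (r-1)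
    have e0 : x ⟨r - 1, hr1⟩ = y ⟨r - 1, hr1⟩ := by
      have := hc ⟨0, h0r⟩
      simpa [Fr] using this
    -- j = 1 : x 0 + x (r-1) = y 0 + y (r-1)
    have e1 : x ⟨0, h0r⟩ + x ⟨r - 1, hr1⟩ = y ⟨0, h0r⟩ + y ⟨r - 1, hr1⟩ := by
      have := hc ⟨1, h1r⟩
      simpa [Fr] using this
    have e0' : x ⟨0, h0r⟩ = y ⟨0, h0r⟩ := by
      rw [e0] at e1
      exact add_right_cancel e1
    funext i
    rcases Nat.eq_zero_or_pos i.val with h0 | hpos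
    · have : i = ⟨0, h0r⟩ := Fin.ext h0
      rw [this]; exact e0'
    · rcases Nat.lt_or_ge (i.val + 1) r with hlt | hge
      · have := hc ⟨i.val + 1, hlt⟩
        have h2 : ¬ (i.val + 1 = 0) := by omega
        have h3 : ¬ (i.val + 1 = 1) := by omega
        simp only [Fr, h2, h3, if_false, Nat.add_sub_cancel] at this
        have : x ⟨i.val, i.isLt⟩ = y ⟨i.val, i.isLt⟩ := this
        simpa using this
      · have hi : i = ⟨r - 1, hr1⟩ := Fin.ext (by simp only [Fin.val_mk]; omega)
        rw [hi]; exact e0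
  · intro x y h
    have hc : ∀ j : Fin r, x j - Fr r x j = y j - Fr r y j := fun j => congrFun h j
    set d : Fin r → ZMod 2 := fun i => x i - y i with hd
    have e0 : d ⟨0, h0r⟩ = d ⟨r - 1, hr1⟩ := by
      have := hc ⟨0, h0r⟩
      simp only [Fr] at this
      norm_num at this
      simp only [hd]
      linear_combination this
    have e1 : d ⟨1, h1r⟩ = d ⟨0, h0r⟩ + d ⟨r - 1, hr1⟩ := by
      have := hc ⟨1, h1r⟩
      simp only [Fr] at this
      norm_num at this
      simp only [hd]
      linear_combination this
    have echain : ∀ k : ℕ, 1 ≤ k → (hk : k + 2 ≤ r) → d ⟨k + 1, by omega⟩ = d ⟨k, by omega⟩ := by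
      intro k hk1 hk
      have := hc ⟨k + 1, by omega⟩
      have h2 : ¬ (k + 1 = 0) := by omega
      have h3 : ¬ (k + 1 = 1) := by omega
      simp only [Fr, h2, h3, if_false, Nat.add_sub_cancel] at this
      simp only [hd]
      linear_combination this
    have d1 : d ⟨1, h1r⟩ = 0 := by
      rw [e1, ← e0, two]
    have claim : ∀ k : ℕ, (hk : k < r) → 1 ≤ k → d ⟨k, hk⟩ = 0 := by
      intro k
      induction k with
      | zero => intro _ h; omega
      | succ n ih =>
        intro hk _
        rcases Nat.eq_zero_or_pos n with hn | hn
        · subst hn; exact d1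
        · rw [echain n hn (by omega)]
          exact ih (by omega) hn
    have dall : ∀ i : Fin r, d i = 0 := by
      intro i
      rcases Nat.eq_zero_or_pos i.val with h0 | hpos
      · have : i = ⟨0, h0r⟩ := Fin.ext h0
        rw [this, e0]
        exact claim (r-1) hr1 (by omega)
      · have : i = ⟨i.val, i.isLt⟩ := Fin.ext rfl
        rw [this]
        exact claim _ i.isLt hpos
    funext i
    have := dall i
    simp only [hd] at this
    exact sub_eq_zero.mp this
end

section
/- For all integers m, n ≥ 2, the group (ℤ/2^mℤ)^n admits an antiautomorphism. -/
theorem z2m_pow_n_admits_antiautomorphism (m n : ℕ) (hm : 2 ≤ m) (hn : 2 ≤ n) :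
    ∃ f : (Fin n → ZMod (2 ^ m)) → (Fin n → ZMod (2 ^ m)),
      Function.Bijective f ∧ Function.Injective (fun x => x - f x) := by
  have h0 : 0 < n := by omega
  have h1 : 1 < n := by omega
  set f : (Fin n → ZMod (2 ^ m)) → (Fin n → ZMod (2 ^ m)) :=
    fun x i => if h : (i : ℕ) + 1 < n then x ⟨(i : ℕ) + 1, h⟩ else x ⟨0, h0⟩ + x ⟨1, h1⟩
    with hf
  -- accessor lemmas for f
  have fv : ∀ (x : Fin n → ZMod (2 ^ m)) (i j : Fin n), (j : ℕ) = (i : ℕ) + 1 →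
      f x i = x j := by
    intro x i j hj
    have hc : (i : ℕ) + 1 < n := by have := j.isLt; omega
    exact (dif_pos hc).trans (congrArg x (Fin.ext (by simp [hj])))
  have fv' : ∀ (x : Fin n → ZMod (2 ^ m)) (i : Fin n), (i : ℕ) = n - 1 →
      f x i = x ⟨0, h0⟩ + x ⟨1, h1⟩ := by
    intro x i hi
    exact dif_neg (by omega)
  have fsub : ∀ x y, f (x - y) = f x - f y := by
    intro x y
    funext i
    simp only [hf, Pi.sub_apply]
    split <;> ring
  refine ⟨f, ?_, ?_⟩
  · set g : (Fin n → ZMod (2 ^ m)) → (Fin n → ZMod (2 ^ m)) :=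
      fun y i => if (i : ℕ) = 0 then y ⟨n - 1, by omega⟩ - y ⟨0, h0⟩
        else y ⟨(i : ℕ) - 1, by omega⟩ with hg
    have gv0 : ∀ (y : Fin n → ZMod (2 ^ m)) (i : Fin n), (i : ℕ) = 0 →
        g y i = y ⟨n - 1, by omega⟩ - y ⟨0, h0⟩ := by
      intro y i hi
      exact if_pos hi
    have gv : ∀ (y : Fin n → ZMod (2 ^ m)) (i j : Fin n), (i : ℕ) = (j : ℕ) + 1 →
        g y i = y j := by
      intro y i j hij
      exact (if_neg (by omega)).trans (congrArg y (Fin.ext (by simp [hij])))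
    have hfg : ∀ y, f (g y) = y := by
      intro y; funext i
      by_cases hc : (i : ℕ) + 1 < n
      · rw [fv (g y) i ⟨(i : ℕ) + 1, hc⟩ (by simp), gv y ⟨(i : ℕ) + 1, hc⟩ i (by simp)]
      · have hi := i.isLt
        rw [fv' (g y) i (by omega), gv0 y ⟨0, h0⟩ (by simp),
          gv y ⟨1, h1⟩ ⟨0, h0⟩ (by simp)]
        have e : y (⟨n - 1, by omega⟩ : Fin n) = y i :=
          congrArg y (Fin.ext (by simp; omega))
        linear_combination e
    have hgf : ∀ x, g (f x) = x := by
      intro x; funext i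
      have hi := i.isLt
      by_cases hc : (i : ℕ) = 0
      · rw [gv0 (f x) i hc, fv' x ⟨n - 1, by omega⟩ (by simp),
          fv x ⟨0, h0⟩ ⟨1, h1⟩ (by simp)]
        have e : x (⟨0, h0⟩ : Fin n) = x i := congrArg x (Fin.ext (by simp [hc]))
        linear_combination e
      · rw [gv (f x) i ⟨(i : ℕ) - 1, by omega⟩ (by simp; omega),
          fv x ⟨(i : ℕ) - 1, by omega⟩ i (by simp; omega)]
    exact Function.bijective_iff_has_inverse.2 ⟨g, hgf, hfg⟩
  · intro x y hxy
    have hz : x - y = f (x - y) := by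
      rw [fsub]
      have h' : x - f x = y - f y := hxy
      linear_combination (norm := abel) h'
    set z := x - y with hzdef
    have key : ∀ k : ℕ, k < n → z ⟨n - 1 - k, by omega⟩ = z ⟨n - 1, by omega⟩ := by
      intro k
      induction k with
      | zero => intro hk; rfl
      | succ p ih =>
        intro hk
        have hp := ih (by omega)
        have hc : z ⟨n - 1 - (p + 1), by omega⟩ = z ⟨n - 1 - p, by omega⟩ := by
          conv_lhs => rw [hz]
          exact fv z ⟨n - 1 - (p + 1), by omega⟩ ⟨n - 1 - p, by omega⟩ (by simp; omega)
        rw [hc, hp]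
    have hzero : z ⟨n - 1, by omega⟩ = 0 := by
      have h : z ⟨n - 1, by omega⟩ = z ⟨0, h0⟩ + z ⟨1, h1⟩ := by
        conv_lhs => rw [hz]
        exact fv' z ⟨n - 1, by omega⟩ (by simp)
      have e0 := key (n - 1) (by omega)
      have e1 := key (n - 2) (by omega)
      simp only [show n - 1 - (n - 1) = 0 from by omega,
        show n - 1 - (n - 2) = 1 from by omega] at e0 e1
      rw [e0, e1] at h
      have h2 : (1 - 2 : ZMod (2 ^ m)) * z ⟨n - 1, by omega⟩ = 0 := by
        linear_combination h
      have hu : IsUnit (1 - 2 : ZMod (2 ^ m)) := by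
        have : (1 - 2 : ZMod (2 ^ m)) = -1 := by ring
        rw [this]
        exact IsUnit.neg isUnit_one
      exact (hu.mul_right_eq_zero).mp h2
    have hall : z = 0 := by
      funext i
      have hk := key (n - 1 - (i : ℕ)) (by omega)
      rw [hzero] at hk
      rw [Pi.zero_apply, ← hk]
      exact congrArg z (Fin.ext (by simp; omega))
    exact sub_eq_zero.mp hall
end

section
/- The group ℤ/2ℤ ⊕ ℤ/4ℤ admits no biantiautomorphism; that is, there is no group automorphism f of ℤ/2ℤ ⊕ ℤ/4ℤ such that x ↦ x - f(x) is injective. -/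
theorem z2_z4_no_biantiautomorphism :
    ¬ ∃ f : ZMod 2 × ZMod 4 ≃+ ZMod 2 × ZMod 4,
      Function.Injective (fun x => x - f x) := by
  rintro ⟨f, hinj⟩
  -- f has no nonzero fixed point
  have hfix : ∀ x : ZMod 2 × ZMod 4, f x = x → x = 0 := by
    intro x hx
    have : (fun x => x - f x) x = (fun x => x - f x) 0 := by
      simp [hx]
    exact hinj this
  set p := f (0, (1 : ZMod 4)) with hp
  have key : f (0, (2 : ZMod 4)) = (p.1 + p.1, p.2 + p.2) := by
    have : ((0 : ZMod 2), (2 : ZMod 4)) = (0, 1) + (0, 1) := by decide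
    rw [this, map_add, ← hp, Prod.mk.injEq]
    constructor <;> rfl
  have h1 : p.1 + p.1 = 0 := by
    have : ∀ a : ZMod 2, a + a = 0 := by decide
    exact this _
  have h2 : p.2 + p.2 = 0 ∨ p.2 + p.2 = 2 := by
    have : ∀ b : ZMod 4, b + b = 0 ∨ b + b = 2 := by decide
    exact this _
  rcases h2 with h2 | h2
  · have : f (0, (2 : ZMod 4)) = f 0 := by
      rw [key, h1, h2, map_zero]; rfl
    have := f.injective this
    exact absurd this (by decide)
  · have : ((0 : ZMod 2), (2 : ZMod 4)) = 0 := by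
      apply hfix; rw [key, h1, h2]
    exact absurd this (by decide)
end

section
/- Let n be an odd integer with prime factorization n = ∏ p^(α_p) over the set P of primes dividing n. Then the number of automorphisms f of ℤ/nℤ such that x ↦ x - f(x) is injective equals ∏_{p ∈ P} p^(α_p - 1)(p - 2). -/
/-!
Evaluation at `1` identifies the automorphisms of `ZMod n` with its units, and turns `x ↦ x - f x`
into multiplication by `1 - f 1`; so the biantiautomorphisms correspond to the exceptional units
(in Nagell's sense): the `a` with both `a` and `1 - a` units. Their number is multiplicative in `n`
by the Chinese remainder theorem. In the local ring `ZMod (p ^ k)` no `a` has both `a` and `1 - a`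
non-units, so the non-units and their images under `a ↦ 1 - a` are two disjoint sets of size
`p ^ (k - 1)`, and the exceptional units are the remaining `p ^ k - 2 p ^ (k - 1)` elements.
-/

open Function Set

def exceptionalUnits (R : Type*) [Ring R] : Set R := {a | IsUnit a ∧ IsUnit (1 - a)}

def biantiautomorphisms (G : Type*) [AddGroup G] : Set (G ≃+ G) :=
  {f | Injective fun x ↦ x - f x}

section Ring

variable {R S : Type*} [Ring R] [Ring S]

theorem exceptionalUnits_prod :
    exceptionalUnits (R × S) = exceptionalUnits R ×ˢ exceptionalUnits S := by
  ext a
  simp only [exceptionalUnits, mem_ofPred_eq, mem_prod, Prod.isUnit_iff, Prod.fst_sub,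
    Prod.snd_sub, Prod.fst_one, Prod.snd_one]
  tauto

theorem RingEquiv.ncard_exceptionalUnits (e : R ≃+* S) :
    (exceptionalUnits R).ncard = (exceptionalUnits S).ncard := by
  have : e ⁻¹' exceptionalUnits S = exceptionalUnits R := by
    ext a
    change IsUnit (e a) ∧ IsUnit (1 - e a) ↔ IsUnit a ∧ IsUnit (1 - a)
    rw [← map_one e, ← map_sub, isUnit_map_iff, isUnit_map_iff]
  rw [← this, ncard_preimage_of_injective_subset_range e.injective
    (e.surjective.range_eq ▸ subset_univ _)]

end Ring

theorem ncard_nonunits_add_card_units (M : Type*) [Monoid M] [Finite M] :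
    (nonunits M).ncard + Nat.card Mˣ = Nat.card M := by
  have : (nonunits M)ᶜ = range ((↑) : Mˣ → M) := by ext; simp [nonunits, IsUnit]
  rw [← ncard_range_of_injective Units.val_injective, ← this, ncard_add_ncard_compl]

theorem IsLocalRing.ncard_exceptionalUnits_add_two_mul (R : Type*) [CommRing R] [IsLocalRing R]
    [Finite R] : (exceptionalUnits R).ncard + 2 * (nonunits R).ncard = Nat.card R := by
  set N' := (1 - ·) ⁻¹' nonunits R
  have hN' : N'.ncard = (nonunits R).ncard :=
    ncard_preimage_of_injective_subset_range sub_right_injective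
      fun a _ ↦ ⟨1 - a, sub_sub_cancel 1 a⟩
  have hdisj : Disjoint (nonunits R) N' :=
    disjoint_left.2 fun a ha h1a ↦ (isUnit_or_isUnit_one_sub_self a).elim ha h1a
  have hcompl : (nonunits R ∪ N')ᶜ = exceptionalUnits R := by
    ext a; simp [N', nonunits, exceptionalUnits]
  rw [← hcompl, two_mul]
  nth_rw 2 [← hN']
  rw [← ncard_union_eq hdisj, add_comm, ncard_add_ncard_compl]

namespace ZMod

instance (p k : ℕ) [Fact p.Prime] [NeZero k] : IsLocalRing (ZMod (p ^ k)) :=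
  have : Fact (1 < p ^ k) := ⟨Nat.one_lt_pow (NeZero.ne k) (Fact.out : p.Prime).one_lt⟩
  .of_surjective' (PadicInt.toZModPow k) (ringHom_surjective _)

theorem ncard_exceptionalUnits_one : (exceptionalUnits (ZMod 1)).ncard = 1 := by
  have : exceptionalUnits (ZMod 1) = univ :=
    eq_univ_of_forall fun a ↦ ⟨isUnit_of_subsingleton a, isUnit_of_subsingleton _⟩
  rw [this, ncard_univ, Nat.card_zmod]

theorem ncard_exceptionalUnits_mul {m k : ℕ} (h : m.Coprime k) :
    (exceptionalUnits (ZMod (m * k))).ncard =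
      (exceptionalUnits (ZMod m)).ncard * (exceptionalUnits (ZMod k)).ncard := by
  rw [(chineseRemainder h).ncard_exceptionalUnits, exceptionalUnits_prod, ncard_prod]

theorem ncard_exceptionalUnits_prime_pow {p k : ℕ} (hp : p.Prime) (hk : k ≠ 0) :
    (exceptionalUnits (ZMod (p ^ k))).ncard = p ^ (k - 1) * (p - 2) := by
  have : Fact p.Prime := ⟨hp⟩
  have : NeZero k := ⟨hk⟩
  have hE := IsLocalRing.ncard_exceptionalUnits_add_two_mul (ZMod (p ^ k))
  have hN := ncard_nonunits_add_card_units (ZMod (p ^ k))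
  have hcard : Nat.card (ZMod (p ^ k)) = p ^ (k - 1) * p := by
    rw [Nat.card_zmod, pow_sub_one_mul hk]
  have hunits : Nat.card (ZMod (p ^ k))ˣ = p ^ (k - 1) * p - p ^ (k - 1) := by
    rw [Nat.card_eq_fintype_card, card_units_eq_totient, Nat.totient_prime_pow hp hk.bot_lt,
      Nat.mul_sub_one]
  have hq : p ^ (k - 1) ≤ p ^ (k - 1) * p := Nat.le_mul_of_pos_right _ hp.pos
  rw [hcard] at hE hN
  rw [hunits] at hN
  rw [Nat.mul_sub]
  omega

theorem ncard_exceptionalUnits {n : ℕ} (hn : n ≠ 0) :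
    (exceptionalUnits (ZMod n)).ncard =
      ∏ p ∈ n.primeFactors, p ^ (n.factorization p - 1) * (p - 2) := by
  rw [Nat.multiplicative_factorization (fun n ↦ (exceptionalUnits (ZMod n)).ncard)
    (fun _ _ ↦ ncard_exceptionalUnits_mul) ncard_exceptionalUnits_one hn,
    Nat.prod_factorization_eq_prod_primeFactors]
  exact Finset.prod_congr rfl fun p hp ↦ ncard_exceptionalUnits_prime_pow
    (Nat.prime_of_mem_primeFactors hp) (Finsupp.mem_support_iff.1 (n.support_factorization ▸ hp))

variable {n : ℕ}

theorem addMonoidHom_apply_eq_mul (f : ZMod n →+ ZMod n) (x : ZMod n) : f x = f 1 * x := by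
  rw [mul_comm, ← x.intCast_zmod_cast, ← zsmul_eq_mul, ← map_zsmul, zsmul_one]

theorem addMonoidHom_injective_iff [NeZero n] (f : ZMod n →+ ZMod n) :
    Injective f ↔ IsUnit (f 1) := by
  rw [IsUnit.isUnit_iff_mulLeft_bijective, ← Finite.injective_iff_bijective,
    ← funext (addMonoidHom_apply_eq_mul f)]

theorem injective_sub_addAut_iff [NeZero n] (f : ZMod n ≃+ ZMod n) :
    Injective (fun x ↦ x - f x) ↔ IsUnit (1 - f 1) :=
  addMonoidHom_injective_iff (AddMonoidHom.id _ - f.toAddMonoidHom)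

theorem addAut_eval_one_injective : Injective fun f : ZMod n ≃+ ZMod n ↦ f 1 :=
  fun f g h ↦ AddEquiv.ext fun x ↦ (addMonoidHom_apply_eq_mul f.toAddMonoidHom x).trans
    ((congrArg (· * x) h).trans (addMonoidHom_apply_eq_mul g.toAddMonoidHom x).symm)

theorem image_eval_one_biantiautomorphisms [NeZero n] :
    (fun f : ZMod n ≃+ ZMod n ↦ f 1) '' biantiautomorphisms (ZMod n) =
      exceptionalUnits (ZMod n) := by
  ext a
  constructor
  · rintro ⟨f, hf, rfl⟩
    exact ⟨(addMonoidHom_injective_iff f.toAddMonoidHom).1 f.injective,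
      (injective_sub_addAut_iff f).1 hf⟩
  · rintro ⟨ha, h1a⟩
    refine ⟨DistribMulAction.toAddEquiv (ZMod n) ha.unit, ?_, ?_⟩
    · exact (injective_sub_addAut_iff _).2 (by simpa using h1a)
    · simp

end ZMod

theorem count_biantiautomorphisms (n : ℕ) (ho : Odd n) :
    {f : ZMod n ≃+ ZMod n | Function.Injective (fun x => x - f x)}.ncard
      = ∏ p ∈ n.primeFactors, p ^ (n.factorization p - 1) * (p - 2) := by
  have hn : n ≠ 0 := by rintro rfl; simp at ho
  have : NeZero n := ⟨hn⟩
  change (biantiautomorphisms (ZMod n)).ncard = _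
  rw [← ZMod.ncard_exceptionalUnits hn, ← ZMod.image_eval_one_biantiautomorphisms,
    ncard_image_of_injective _ ZMod.addAut_eval_one_injective]
end
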